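/- Let 𝒜 = (ρ_i)_{i∈A} be a totally ordered family of valuations on K[x] and suppose f ∈ K[x] is not 𝒜-stable. Then ρ_i(f) < ρ_j(f) for all i < j in A. -/

import Mathlib

/-!
For valuations `μ ≤ ν` on `K[x]`, let `φ` be a polynomial of least degree with `μ φ < ν φ`.
Writing `g = g % φ + φ * q`, the two valuations agree on `g % φ` and `ν` exceeds `μ` on `φ * q`,
so `μ g < ν g` exactly when `μ g < μ (g % φ)`, a condition in which `ν` no longer appears.
If `μ ≤ μ' ≤ ν` with `μ ≠ μ'`, then `μ φ < μ' φ`, so the same `φ` serves for the pair `μ ≤ μ'`,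
whence `μ f = μ' f ↔ μ f = ν f`. Along the chain, an equality `ρ i f = ρ j f` with `i < j`
thus persists to all `k ≥ j`, and `f` would be stable.
-/

open Polynomial Finset

variable {K : Type*} [Field K] {Λ : Type*} [AddCommGroup Λ] [LinearOrder Λ] [IsOrderedAddMonoid Λ]

/-- `v` is a valuation on the field `K` with values in `Λ∞ = WithTop Λ`. -/
def IsVal (v : K → WithTop Λ) : Prop :=
  (∀ a, v a = ⊤ ↔ a = 0) ∧ v 1 = 0 ∧ (∀ a b, v (a * b) = v a + v b) ∧
    (∀ a b, min (v a) (v b) ≤ v (a + b))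

/-- `μ` is a valuation on `K[x]` extending `v`. -/
def ExtVal (v : K → WithTop Λ) (μ : Polynomial K → WithTop Λ) : Prop :=
  (∀ f g, μ (f * g) = μ f + μ g) ∧ (∀ f g, min (μ f) (μ g) ≤ μ (f + g)) ∧
    (∀ a, μ (Polynomial.C a) = v a)

/-- `h` divides `g` μ-equivalently (`h ∣_μ g`): there is `q` with `μ(g - q h) > μ(g)`. -/
def MuDvd (μ : Polynomial K → WithTop Λ) (h g : Polynomial K) : Prop :=
  ∃ q : Polynomial K, μ g < μ (g - q * h)

/-- `φ` is μ-minimal: `φ ∤_μ f` for every nonzero `f` of degree less than `deg φ`. -/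
def MuMinimal (μ : Polynomial K → WithTop Λ) (φ : Polynomial K) : Prop :=
  ∀ f : Polynomial K, f ≠ 0 → f.degree < φ.degree → ¬ MuDvd μ φ f

/-- `φ` is μ-irreducible: the principal ideal generated by `in_μ φ` in the graded
algebra is a nonzero prime ideal (stated via μ-divisibility). -/
def MuIrreducible (μ : Polynomial K → WithTop Λ) (φ : Polynomial K) : Prop :=
  μ φ ≠ ⊤ ∧ ¬ MuDvd μ φ 1 ∧
    ∀ f g : Polynomial K, MuDvd μ φ (f * g) → MuDvd μ φ f ∨ MuDvd μ φ g

/-- A (MacLane–Vaquié) key polynomial for `μ`. -/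
def KeyPoly (μ : Polynomial K → WithTop Λ) (φ : Polynomial K) : Prop :=
  φ.Monic ∧ MuMinimal μ φ ∧ MuIrreducible μ φ

/-- `μ'` is the augmented valuation `[μ; φ, γ]`: on φ-expansions
`f = Σ a_s φ^s` (with `deg a_s < deg φ`), `μ' f = min_s (μ(a_s) + s·γ)`. -/
def AugVal (μ : Polynomial K → WithTop Λ) (φ : Polynomial K) (γ : WithTop Λ)
    (μ' : Polynomial K → WithTop Λ) : Prop :=
  ∀ (f : Polynomial K) (n : ℕ) (a : ℕ → Polynomial K),
    (∀ s, (a s).degree < φ.degree) →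
    f = ∑ s ∈ Finset.range n, a s * φ ^ s →
    μ' f = (Finset.range n).inf fun s => μ (a s) + s • γ

/-- `f` is 𝒜-stable for the family `ρ`: its values are eventually constant. -/
def AStable {A : Type*} [LinearOrder A] (ρ : A → Polynomial K → WithTop Λ)
    (f : Polynomial K) : Prop :=
  ∃ i₀ : A, ∀ i, i₀ ≤ i → ρ i f = ρ i₀ f

section Separator

variable {μ μ' ν : AddValuation K[X] (WithTop Λ)} {φ : K[X]}

structure IsMinimalSeparator (μ ν : AddValuation K[X] (WithTop Λ)) (φ : K[X]) : Prop where
  lt : μ φ < ν φ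
  eq_of_degree_lt : ∀ h : K[X], h.degree < φ.degree → μ h = ν h

theorem exists_isMinimalSeparator (hle : ∀ g, μ g ≤ ν g) {g : K[X]} (hg : μ g < ν g) :
    ∃ φ, IsMinimalSeparator μ ν φ := by
  let S : Set K[X] := {h | μ h < ν h}
  have hS : S.Nonempty := ⟨g, hg⟩
  refine ⟨Function.argminOn degree S hS, Function.argminOn_mem degree S hS, fun h hh => ?_⟩
  exact (hle h).eq_of_not_lt fun hlt => Function.not_lt_argminOn degree S hlt hh

namespace IsMinimalSeparator

theorem degree_pos (hφ : IsMinimalSeparator μ ν φ) (hC : ∀ c, μ (C c) = ν (C c)) :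
    0 < φ.degree := by
  by_contra! h
  rw [eq_C_of_degree_le_zero h] at hφ
  exact hφ.lt.ne (hC _)

theorem ne_zero (hφ : IsMinimalSeparator μ ν φ) : φ ≠ 0 := by
  rintro rfl
  simpa using hφ.lt

theorem lt_map_mul (hφ : IsMinimalSeparator μ ν φ) (hle : ∀ g, μ g ≤ ν g) {a : WithTop Λ}
    {q : K[X]} (ha : a ≤ μ (φ * q)) (ha_top : a ≠ ⊤) : a < ν (φ * q) := by
  rw [AddValuation.map_mul] at ha ⊢
  rcases eq_or_ne (μ q) ⊤ with hq | hq
  · have hνq : ν q = ⊤ := top_unique (hq ▸ hle q)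
    rw [hνq, add_top]
    exact ha_top.lt_top
  · calc a ≤ μ φ + μ q := ha
      _ < ν φ + μ q := WithTop.add_lt_add_right hq hφ.lt
      _ ≤ ν φ + ν q := by gcongr; exact hle q

theorem map_add_mul (hφ : IsMinimalSeparator μ ν φ) (hle : ∀ g, μ g ≤ ν g) {r : K[X]}
    (hr : r.degree < φ.degree) (q : K[X]) : μ (r + φ * q) = min (μ r) (μ (φ * q)) := by
  rcases ne_or_eq (μ r) (μ (φ * q)) with hne | heq
  · exact μ.map_add_of_distinct_val hne
  refine le_antisymm ?_ (μ.map_add _ _)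
  rw [← heq, min_self]
  rcases eq_or_ne (μ r) ⊤ with htop | htop
  · exact htop ▸ le_top
  have hνr : ν r = μ r := (hφ.eq_of_degree_lt r hr).symm
  have hlt : ν r < ν (φ * q) := hνr ▸ hφ.lt_map_mul hle heq.le htop
  calc μ (r + φ * q) ≤ ν (r + φ * q) := hle _
    _ = μ r := by rw [ν.map_add_of_distinct_val hlt.ne, min_eq_left hlt.le, hνr]

theorem lt_iff (hφ : IsMinimalSeparator μ ν φ) (hle : ∀ g, μ g ≤ ν g) (g : K[X]) :
    μ g < ν g ↔ μ g < μ (g % φ) := by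
  have hr : (g % φ).degree < φ.degree := degree_mod_lt g hφ.ne_zero
  have hνr : ν (g % φ) = μ (g % φ) := (hφ.eq_of_degree_lt _ hr).symm
  have hg := hφ.map_add_mul hle hr (g / φ)
  rw [EuclideanDomain.mod_add_div] at hg
  constructor
  · intro hlt
    by_contra! hge
    have hμg : μ g = μ (g % φ) := le_antisymm (hg.trans_le (min_le_left _ _)) hge
    have hq := hφ.lt_map_mul hle (hg.trans_le (min_le_right _ _)) hlt.ne_top
    have hlt' : ν (g % φ) < ν (φ * (g / φ)) := by rwa [hνr, ← hμg]
    refine hlt.ne' ?_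
    calc ν g = ν (g % φ + φ * (g / φ)) := by rw [EuclideanDomain.mod_add_div]
      _ = ν (g % φ) := by rw [ν.map_add_of_distinct_val hlt'.ne, min_eq_left hlt'.le]
      _ = μ g := by rw [hνr, hμg]
  · intro hlt
    have hq := hφ.lt_map_mul hle (hg.trans_le (min_le_right _ _)) hlt.ne_top
    calc μ g < min (ν (g % φ)) (ν (φ * (g / φ))) := lt_min (hνr ▸ hlt) hq
      _ ≤ ν (g % φ + φ * (g / φ)) := ν.map_add _ _
      _ = ν g := by rw [EuclideanDomain.mod_add_div]

theorem of_le_of_le (hφ : IsMinimalSeparator μ ν φ) (hC : ∀ c, μ (C c) = ν (C c))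
    (h₁ : ∀ g, μ g ≤ μ' g) (h₂ : ∀ g, μ' g ≤ ν g) {g : K[X]} (hg : μ g < μ' g) :
    IsMinimalSeparator μ μ' φ := by
  have hle g : μ g ≤ ν g := (h₁ g).trans (h₂ g)
  have hagree (h : K[X]) (hh : h.degree < φ.degree) : μ h = μ' h :=
    le_antisymm (h₁ h) ((h₂ h).trans (hφ.eq_of_degree_lt h hh).ge)
  refine ⟨(h₁ φ).lt_of_ne fun hφφ => ?_, hagree⟩
  -- otherwise `μ'` would agree with `μ` on a minimal separator `ψ` of `μ < μ'`
  obtain ⟨ψ, hψ⟩ := exists_isMinimalSeparator h₁ hg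
  have hr : (ψ % φ).degree < φ.degree := degree_mod_lt ψ hφ.ne_zero
  have hq : μ (ψ / φ) = μ' (ψ / φ) :=
    hψ.eq_of_degree_lt _ (degree_div_lt hψ.ne_zero (hφ.degree_pos hC))
  have hψr : μ ψ < μ (ψ % φ) := (hφ.lt_iff hle ψ).mp (hψ.lt.trans_le (h₂ ψ))
  have hψq : μ ψ = μ (φ * (ψ / φ)) := by
    have h := hφ.map_add_mul hle hr (ψ / φ)
    rw [EuclideanDomain.mod_add_div] at h
    rw [h, min_eq_right]
    exact (min_lt_iff.mp (h ▸ hψr)).resolve_left (lt_irrefl _) |>.le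
  have hq' : μ' (φ * (ψ / φ)) = μ ψ := by
    rw [AddValuation.map_mul, ← hφφ, ← hq, ← AddValuation.map_mul, hψq]
  have hlt : μ' (φ * (ψ / φ)) < μ' (ψ % φ) := by rwa [hq', ← hagree _ hr]
  refine hψ.lt.ne ?_
  calc μ ψ = min (μ' (ψ % φ)) (μ' (φ * (ψ / φ))) := by rw [min_eq_right hlt.le, hq']
    _ = μ' (ψ % φ + φ * (ψ / φ)) := (μ'.map_add_of_distinct_val hlt.ne').symm
    _ = μ' ψ := by rw [EuclideanDomain.mod_add_div]

end IsMinimalSeparator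

theorem map_eq_of_map_eq_of_le_of_le (hC : ∀ c, μ (C c) = ν (C c))
    (h₁ : ∀ g, μ g ≤ μ' g) (h₂ : ∀ g, μ' g ≤ ν g) {g : K[X]} (hg : μ g < μ' g) {f : K[X]}
    (hf : μ f = μ' f) : ν f = μ f := by
  have hle g : μ g ≤ ν g := (h₁ g).trans (h₂ g)
  obtain ⟨φ, hφ⟩ := exists_isMinimalSeparator hle (hg.trans_le (h₂ g))
  refine ((hle f).eq_of_not_lt ?_).symm
  rw [hφ.lt_iff hle, ← (hφ.of_le_of_le hC h₁ h₂ hg).lt_iff h₁]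
  exact hf.not_lt

end Separator

noncomputable def ExtVal.toAddValuation {v : K → WithTop Λ} (hv : IsVal v) {μ : K[X] → WithTop Λ}
    (hμ : ExtVal v μ) : AddValuation K[X] (WithTop Λ) :=
  AddValuation.of μ (by rw [← C_0, hμ.2.2, (hv.1 0).2 rfl]) (by rw [← C_1, hμ.2.2, hv.2.1])
    hμ.2.1 hμ.1

/-- if `f` is not 𝒜-stable then `ρ_i(f) < ρ_j(f)` for all `i < j`. -/
theorem unstable_strict_increase (v : K → WithTop Λ)
    {A : Type*} [LinearOrder A] (ρ : A → Polynomial K → WithTop Λ)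
    (hv : IsVal v) (hval : ∀ i, ExtVal v (ρ i))
    (hmono : ∀ i j : A, i ≤ j → ∀ f, ρ i f ≤ ρ j f)
    (hstrict : ∀ i j : A, i < j → ρ i ≠ ρ j)
    (f : Polynomial K) (hf : ¬ AStable ρ f) :
    ∀ i j : A, i < j → ρ i f < ρ j f := by
  intro i j hij
  refine (hmono i j hij.le f).lt_of_ne fun hij_eq => hf ⟨j, fun k hjk => ?_⟩
  rcases hjk.eq_or_lt with rfl | hjk
  · rfl
  obtain ⟨g, hg⟩ := Function.ne_iff.mp (hstrict i j hij)
  have hik := map_eq_of_map_eq_of_le_of_le (μ := (hval i).toAddValuation hv)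
    (μ' := (hval j).toAddValuation hv) (ν := (hval k).toAddValuation hv)
    (fun c => ((hval i).2.2 c).trans ((hval k).2.2 c).symm) (hmono i j hij.le) (hmono j k hjk.le)
    ((hmono i j hij.le g).lt_of_ne hg) hij_eq
  exact hik.trans hij_eq
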